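/- arXiv:math/0203042 — 6 statements merged into one kernel-verified Lean document; each statement's English description precedes it below -/
import Mathlib

section
/- Let F be the free group on generators x₁, …, x_m (m ≥ 1) and let ℤ[F] be its integral group ring. Then every element f ∈ F, viewed as an element of ℤ[F], admits a unique expansion f = 1 + Σ_{j=1}^m f_j · (x_j − 1) with f₁, …, f_m ∈ ℤ[F]. (The element f_j is by definition the j-th Fox derivative ∂f/∂x_j.) -/
/-!
Homomorphisms `F →* M ⋊ F` that split the projection are the same as crossed homomorphisms
`D : F → M`, `D (u * v) = D u + u • D v`. Since `F` is free, a crossed homomorphism exists with any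
prescribed values on the generators and is determined by them. Applied to `M = ℤ[F]` with the
values `δᵢⱼ`, this yields the Fox derivative `∂/∂xⱼ`, extended linearly to `ℤ[F]`. Both sides of
the fundamental formula `g - 1 = ∑ⱼ (∂g/∂xⱼ) (xⱼ - 1)` are crossed homomorphisms and agree on
generators, which gives existence. Uniqueness holds because `∂/∂xⱼ (a (xᵢ - 1)) = δᵢⱼ a`, so the
coefficients of any such expansion of `f` are the `∂f/∂xⱼ`.
-/

section CrossedHom

variable {G R M : Type*} [Group G] [Monoid R] [AddGroup M] [DistribMulAction R M]

def IsCrossedHom (ρ : G →* R) (D : G → M) : Prop :=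
  ∀ u v, D (u * v) = D u + ρ u • D v

variable (M) in
def smulMulAut (ρ : G →* R) : G →* MulAut (Multiplicative M) :=
  (MulAutMultiplicative M).symm.toMonoidHom.comp
    ((DistribMulAction.toAddAut Rˣ M).comp ρ.toHomUnits)

theorem smulMulAut_apply (ρ : G →* R) (g : G) (v : Multiplicative M) :
    smulMulAut M ρ g v = .ofAdd (ρ g • v.toAdd) :=
  rfl

namespace IsCrossedHom

variable {ρ : G →* R} {D : G → M}

theorem map_one (hD : IsCrossedHom ρ D) : D 1 = 0 := by
  simpa using hD 1 1

def toSemidirectProduct (hD : IsCrossedHom ρ D) :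
    G →* Multiplicative M ⋊[smulMulAut M ρ] G where
  toFun g := ⟨.ofAdd (D g), g⟩
  map_one' := by ext <;> simp [hD.map_one]
  map_mul' u v := by ext <;> simp [hD u v, smulMulAut_apply]

end IsCrossedHom

end CrossedHom

namespace FreeGroup

section CrossedLift

variable {α R M : Type*} [Monoid R] [AddGroup M] [DistribMulAction R M]

def crossedLiftHom (ρ : FreeGroup α →* R) (v : α → M) :
    FreeGroup α →* Multiplicative M ⋊[smulMulAut M ρ] FreeGroup α :=
  lift fun a => ⟨.ofAdd (v a), of a⟩

theorem crossedLiftHom_right (ρ : FreeGroup α →* R) (v : α → M) (g : FreeGroup α) :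
    (crossedLiftHom ρ v g).right = g := by
  suffices SemidirectProduct.rightHom.comp (crossedLiftHom ρ v) = .id _ from
    DFunLike.congr_fun this g
  exact ext_hom _ _ fun a => by simp [crossedLiftHom]

def crossedLift (ρ : FreeGroup α →* R) (v : α → M) (g : FreeGroup α) : M :=
  (crossedLiftHom ρ v g).left.toAdd

theorem crossedLift_of (ρ : FreeGroup α →* R) (v : α → M) (a : α) :
    crossedLift ρ v (of a) = v a := by
  simp [crossedLift, crossedLiftHom]

theorem isCrossedHom_crossedLift (ρ : FreeGroup α →* R) (v : α → M) :
    IsCrossedHom ρ (crossedLift ρ v) := fun u w => by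
  rw [crossedLift, _root_.map_mul, SemidirectProduct.mul_left, crossedLiftHom_right]
  rfl

theorem isCrossedHom_ext {ρ : FreeGroup α →* R} {D D' : FreeGroup α → M}
    (hD : IsCrossedHom ρ D) (hD' : IsCrossedHom ρ D') (h : ∀ a, D (of a) = D' (of a)) :
    D = D' := by
  have := ext_hom hD.toSemidirectProduct hD'.toSemidirectProduct fun a => by
    simp [IsCrossedHom.toSemidirectProduct, h]
  funext g
  simpa [IsCrossedHom.toSemidirectProduct] using congrArg (fun φ => (φ g).left) this

end CrossedLift

section Fox

variable {α : Type*} [DecidableEq α] (k : Type*) [CommRing k]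

local notation "ι" => MonoidAlgebra.of k (FreeGroup α)

noncomputable def foxDeriv (j : α) :
    MonoidAlgebra k (FreeGroup α) →ₗ[k] MonoidAlgebra k (FreeGroup α) :=
  (MonoidAlgebra.basis (FreeGroup α) k).constr k (crossedLift ι (Pi.single j 1))

variable {k}

theorem foxDeriv_of (j : α) (g : FreeGroup α) :
    foxDeriv k j (ι g) = crossedLift ι (Pi.single j 1) g := by
  rw [MonoidAlgebra.of_apply, ← MonoidAlgebra.basis_apply]
  exact Module.Basis.constr_basis _ _ _ _

theorem isCrossedHom_foxDeriv_of (j : α) : IsCrossedHom ι fun g => foxDeriv k j (ι g) := by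
  simpa only [foxDeriv_of] using isCrossedHom_crossedLift _ _

theorem foxDeriv_of_of (j i : α) :
    foxDeriv k j (ι (of i)) = (Pi.single j 1 : α → MonoidAlgebra k (FreeGroup α)) i := by
  rw [foxDeriv_of, crossedLift_of]

theorem foxDeriv_one (j : α) : foxDeriv k j 1 = 0 := by
  rw [← (MonoidAlgebra.of k (FreeGroup α)).map_one]
  exact (isCrossedHom_foxDeriv_of j).map_one

theorem foxDeriv_mul_of (j : α) (a : MonoidAlgebra k (FreeGroup α)) (g : FreeGroup α) :
    foxDeriv k j (a * ι g) = foxDeriv k j a + a * foxDeriv k j (ι g) := by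
  induction a using MonoidAlgebra.induction_on with
  | of h => simpa [smul_eq_mul] using isCrossedHom_foxDeriv_of j h g
  | add a b ha hb => rw [add_mul, map_add, map_add, ha, hb, add_mul]; abel
  | smul r a ha => rw [smul_mul_assoc, map_smul, map_smul, ha, smul_add, smul_mul_assoc]

theorem foxDeriv_mul_of_sub_one (j i : α) (a : MonoidAlgebra k (FreeGroup α)) :
    foxDeriv k j (a * (ι (of i) - 1)) =
      (Pi.single i a : α → MonoidAlgebra k (FreeGroup α)) j := by
  rw [mul_sub, mul_one, map_sub, foxDeriv_mul_of, foxDeriv_of_of, add_sub_cancel_left]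
  by_cases h : i = j <;> simp [h]

theorem foxDeriv_sum_mul_of_sub_one [Fintype α] (j : α)
    (d : α → MonoidAlgebra k (FreeGroup α)) :
    foxDeriv k j (∑ i, d i * (ι (of i) - 1)) = d j := by
  simp only [map_sum, foxDeriv_mul_of_sub_one, Finset.sum_pi_single, Finset.mem_univ, if_true]

theorem of_sub_one_eq_sum_foxDeriv [Fintype α] (g : FreeGroup α) :
    ι g - 1 = ∑ j, foxDeriv k j (ι g) * (ι (of j) - 1) := by
  refine congrFun (isCrossedHom_ext (ρ := ι) (D := fun g => ι g - 1)
    (D' := fun g => ∑ j, foxDeriv k j (ι g) * (ι (of j) - 1)) ?_ ?_ fun i => ?_) g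
  · intro u v
    dsimp only
    rw [_root_.map_mul, smul_eq_mul, mul_sub, mul_one]
    abel
  · intro u v
    simp only [_root_.map_mul, foxDeriv_mul_of, add_mul, Finset.sum_add_distrib, smul_eq_mul,
      Finset.mul_sum, mul_assoc]
  · simp only [foxDeriv_of_of, Pi.single_apply, ite_mul, one_mul, zero_mul, Finset.sum_ite_eq,
      Finset.mem_univ, if_true]

end Fox

end FreeGroup

theorem fox_derivative_expansion_general (m : ℕ) (f : FreeGroup (Fin m)) :
    ∃! d : Fin m → MonoidAlgebra ℤ (FreeGroup (Fin m)),
      (MonoidAlgebra.of ℤ (FreeGroup (Fin m)) f : MonoidAlgebra ℤ (FreeGroup (Fin m))) =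
        1 + ∑ j : Fin m,
          d j * (MonoidAlgebra.of ℤ (FreeGroup (Fin m)) (FreeGroup.of j) - 1) := by
  refine ⟨fun j => FreeGroup.foxDeriv ℤ j (MonoidAlgebra.of ℤ _ f), ?_,
    fun d hd => funext fun j => ?_⟩
  · beta_reduce
    rw [← FreeGroup.of_sub_one_eq_sum_foxDeriv]
    abel
  · rw [hd, map_add, FreeGroup.foxDeriv_one, FreeGroup.foxDeriv_sum_mul_of_sub_one, zero_add]

/-- Fox derivatives: every element `f` of the free group `F` on `m ≥ 1` generators,
viewed inside the group ring `ℤ[F]`, has a unique expansion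
`f = 1 + ∑ⱼ fⱼ · (xⱼ - 1)` with `fⱼ ∈ ℤ[F]`. -/
theorem fox_derivative_expansion (m : ℕ) (hm : 1 ≤ m) (f : FreeGroup (Fin m)) :
    ∃! d : Fin m → MonoidAlgebra ℤ (FreeGroup (Fin m)),
      (MonoidAlgebra.of ℤ (FreeGroup (Fin m)) f : MonoidAlgebra ℤ (FreeGroup (Fin m))) =
        1 + ∑ j : Fin m,
          d j * (MonoidAlgebra.of ℤ (FreeGroup (Fin m)) (FreeGroup.of j) - 1) :=
  fox_derivative_expansion_general m f
end

section
/- Let n ≥ 2 and let R = ℤ[ℤ^n] be the group ring of the free abelian group ℤ^n over ℤ (equivalently, the Laurent polynomial ring ℤ[x₁^{±1}, …, x_n^{±1}]). If an element d ∈ R divides g − 1 for every g ∈ ℤ^n (where g denotes the corresponding monomial basis element of R and 1 the identity monomial), then d is a unit of R. Equivalently, the greatest common divisor of the augmentation ideal of R is 1. -/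
/-!
Let `x = X₀` and `y = X₁` be two distinct coordinate monomials and let `π` be the ring
endomorphism of `ℤ[ℤⁿ]` induced by killing the `0`-th coordinate, i.e. `x ↦ 1`. Its kernel is
the principal ideal `(x - 1)`, since every monomial `g` satisfies `g ≡ π g` modulo `x - 1`.
If `x - 1 = d * a`, then `π d ≠ 0` because `d` also divides `y - 1 = π (y - 1) ≠ 0`; so `π a = 0`,
hence `x - 1 ∣ a`, and cancelling `x - 1` shows that `d` is a unit.
-/

open AddMonoidAlgebra

theorem Units.val_sub_one_dvd_val_zpow_sub_one {R : Type*} [CommRing R] (u : Rˣ) :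
    ∀ m : ℤ, (u : R) - 1 ∣ ((u ^ m : Rˣ) : R) - 1
  | (k : ℕ) => by simpa using sub_one_dvd_pow_sub_one (u : R) k
  | .negSucc k => by
    have h : ((u ^ Int.negSucc k : Rˣ) : R) - 1 =
        -((u ^ Int.negSucc k : Rˣ) : R) * ((u : R) ^ (k + 1) - 1) := by
      rw [zpow_negSucc, neg_mul, mul_sub, ← Units.val_pow_eq_pow_val, Units.inv_mul]
      ring
    exact h ▸ (sub_one_dvd_pow_sub_one (u : R) (k + 1)).mul_left _

theorem isUnit_of_dvd_of_ker_eq_span_singleton {R S : Type*} [CommRing R] [IsDomain R]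
    [CommRing S] [NoZeroDivisors S] (π : R →+* S) {x d : R}
    (hker : RingHom.ker π = Ideal.span {x}) (hx : x ≠ 0) (hdx : d ∣ x) (hd : π d ≠ 0) :
    IsUnit d := by
  obtain ⟨a, rfl⟩ := hdx
  have hπx : π d * π a = 0 := by
    rw [← map_mul, ← RingHom.mem_ker, hker]
    exact Ideal.mem_span_singleton_self _
  have ha : a ∈ RingHom.ker π := (mul_eq_zero.mp hπx).resolve_left hd
  obtain ⟨t, ht⟩ := Ideal.mem_span_singleton.mp (hker ▸ ha)
  refine IsUnit.of_mul_eq_one t (mul_left_cancel₀ (right_ne_zero_of_mul hx) ?_)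
  linear_combination ht.symm

namespace AddMonoidAlgebra

variable {k G : Type*} [CommRing k] [AddCommGroup G]

theorem single_sub_one_dvd_single_zsmul_sub_one (g : G) (m : ℤ) :
    single g (1 : k) - 1 ∣ single (m • g) 1 - 1 := by
  simpa [← map_zpow] using
    Units.val_sub_one_dvd_val_zpow_sub_one ((of k G).toHomUnits (.ofAdd g)) m

theorem single_sub_one_ne_zero [Nontrivial k] {g : G} (hg : g ≠ 0) : single g (1 : k) - 1 ≠ 0 :=
  sub_ne_zero.mpr fun h => hg ((single_left_inj one_ne_zero).mp h)

theorem single_sub_one_dvd_sub_mapDomain (σ : G →+ G) (g : G)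
    (hσ : ∀ a, a - σ a ∈ AddSubgroup.zmultiples g) (f : AddMonoidAlgebra k G) :
    single g (1 : k) - 1 ∣ f - mapDomainRingHom k σ f := by
  induction f using AddMonoidAlgebra.induction_linear with
  | zero => simp
  | add f₁ f₂ h₁ h₂ =>
    rw [map_add, add_sub_add_comm]
    exact dvd_add h₁ h₂
  | single a r =>
    obtain ⟨m, hm⟩ := hσ a
    have h : single a r - single (σ a) r = single (σ a) r * (single (m • g) 1 - 1) := by
      rw [mul_sub, single_mul_single, show m • g = a - σ a from hm, add_sub_cancel, mul_one,
        mul_one]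
    simpa only [mapDomainRingHom_apply, mapDomain_single, h] using
      (single_sub_one_dvd_single_zsmul_sub_one g m).mul_left _

theorem ker_mapDomainRingHom_eq_span_single_sub_one (σ : G →+ G) (g : G) (hσg : σ g = 0)
    (hσ : ∀ a, a - σ a ∈ AddSubgroup.zmultiples g) :
    RingHom.ker (mapDomainRingHom k σ) = Ideal.span {single g 1 - 1} := by
  refine le_antisymm (fun f hf => ?_) ((Ideal.span_singleton_le_iff_mem _).mpr ?_)
  · simpa [RingHom.mem_ker.mp hf, Ideal.mem_span_singleton] using
      single_sub_one_dvd_sub_mapDomain σ g hσ f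
  · rw [RingHom.mem_ker, map_sub, map_one, mapDomainRingHom_apply, mapDomain_single, hσg,
      ← one_def, sub_self]

end AddMonoidAlgebra

/-- In the group ring `R = ℤ[ℤ^n]` with `n ≥ 2`, any common divisor of all the
elements `g - 1` (for `g ∈ ℤ^n`) is a unit: the gcd of the augmentation ideal is 1. -/
theorem gcd_augmentation_ideal_is_one {n : ℕ} (hn : 2 ≤ n)
    (d : AddMonoidAlgebra ℤ (Fin n → ℤ))
    (hd : ∀ g : Fin n → ℤ,
      d ∣ (AddMonoidAlgebra.single g (1 : ℤ) - 1 : AddMonoidAlgebra ℤ (Fin n → ℤ))) :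
    IsUnit d := by
  let i : Fin n := ⟨0, by omega⟩
  let j : Fin n := ⟨1, by omega⟩
  have hji : j ≠ i := by simp [i, j, Fin.ext_iff]
  let σ : (Fin n → ℤ) →+ (Fin n → ℤ) :=
    .id _ - (AddMonoidHom.single _ i).comp (Pi.evalAddMonoidHom _ i)
  have hσ : ∀ a, a - σ a ∈ AddSubgroup.zmultiples (Pi.single i 1) :=
    fun a => ⟨a i, by ext k; by_cases hk : k = i <;> simp [σ, hk]⟩
  have hker := ker_mapDomainRingHom_eq_span_single_sub_one (k := ℤ) σ _ (by simp [σ]) hσ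
  refine isUnit_of_dvd_of_ker_eq_span_singleton _ hker
    (single_sub_one_ne_zero (by simp)) (hd _) fun hπd => ?_
  obtain ⟨b, hb⟩ := hd (Pi.single j 1)
  have hσj : σ (Pi.single j 1) = Pi.single j 1 := by simp [σ, hji]
  have hπy := congrArg (mapDomainRingHom ℤ σ) hb
  rw [map_mul, hπd, zero_mul, map_sub, map_one, mapDomainRingHom_apply, mapDomain_single,
    hσj] at hπy
  exact single_sub_one_ne_zero (by simp) hπy
end

section
/- Let c : ℤ^n → ℂ be a finitely supported function with nonempty support S, and let s : ℤ^n → ℤ be a group homomorphism that is injective on S (i.e. s(g) ≠ s(g') for distinct g, g' ∈ S). Then the Laurent polynomial p = Σ_{g ∈ S} c(g) · t^{s(g)} ∈ ℂ[t^{±1}] is nonzero, and span(p) = max_{g, g' ∈ S} |s(g) − s(g')|. -/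
/-! Since `s` is injective on the support of `c`, no two monomials `c g · T^{s g}` cancel, so the
exponents occurring in `p` are exactly the values of `s` on the support of `c`; the span is then
`max s - min s` over the support, which is the largest of the differences `|s g - s g'|`. -/

/-- The span of a Laurent polynomial: the difference between the largest and the
smallest exponent occurring in it (and `0` for the zero polynomial). -/
noncomputable def laurentSpan (p : LaurentPolynomial ℂ) : ℤ :=
  if h : p.coeff.support.Nonempty then p.coeff.support.max' h - p.coeff.support.min' h else 0

open LaurentPolynomial

theorem Finset.sup'_abs_sub_eq_sup'_sub_inf' {α β : Type*} [AddCommGroup β] [LinearOrder β]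
    [IsOrderedAddMonoid β] {S : Finset α} (hS : S.Nonempty) (f : α → β) :
    (S ×ˢ S).sup' (hS.product hS) (fun p => |f p.1 - f p.2|) = S.sup' hS f - S.inf' hS f := by
  apply le_antisymm
  · refine Finset.sup'_le _ _ fun ⟨a, b⟩ hab => ?_
    obtain ⟨ha, hb⟩ := Finset.mem_product.mp hab
    refine abs_sub_le_iff.mpr ⟨?_, ?_⟩ <;>
      exact sub_le_sub (Finset.le_sup' f ‹_›) (Finset.inf'_le f ‹_›)
  · obtain ⟨a, ha, hfa⟩ := Finset.exists_mem_eq_sup' hS f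
    obtain ⟨b, hb, hfb⟩ := Finset.exists_mem_eq_inf' hS f
    calc S.sup' hS f - S.inf' hS f = |f a - f b| := by
          rw [hfa, hfb, abs_of_nonneg (sub_nonneg.mpr (hfb ▸ Finset.inf'_le f ha))]
      _ ≤ _ := Finset.le_sup' (fun p : α × α => |f p.1 - f p.2|) (Finset.mk_mem_product ha hb)

theorem LaurentPolynomial.coeff_sum_C_mul_T {R α : Type*} [Semiring R] (c : α →₀ R)
    (f : α → ℤ) :
    (∑ g ∈ c.support, C (c g) * T (f g) : R[T;T⁻¹]).coeff = c.mapDomain f := by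
  simp only [Finsupp.mapDomain, Finsupp.sum, AddMonoidAlgebra.coeff_sum, ← single_eq_C_mul_T,
    AddMonoidAlgebra.coeff_single]

theorem laurentSpan_of_support_eq_image {α : Type*} {p : ℂ[T;T⁻¹]} {S : Finset α}
    (hS : S.Nonempty) (f : α → ℤ) (hp : p.coeff.support = S.image f) :
    laurentSpan p = S.sup' hS f - S.inf' hS f := by
  have hne : p.coeff.support.Nonempty := hp ▸ hS.image f
  simp only [laurentSpan, dif_pos hne, Finset.max'_eq_sup', Finset.min'_eq_inf']
  simp_rw [hp, Finset.sup'_image, Finset.inf'_image]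
  rfl

/-- If `c : ℤ^n → ℂ` is finitely supported with nonempty support `S` and the
homomorphism `s : ℤ^n → ℤ` is injective on `S`, then the Laurent polynomial
`p = ∑_{g ∈ S} c(g)·t^{s(g)}` is nonzero and its span equals
`max_{g, g' ∈ S} |s(g) - s(g')|`. -/
theorem span_of_regular_specialization {n : ℕ} (c : (Fin n → ℤ) →₀ ℂ)
    (hc : c.support.Nonempty) (s : (Fin n → ℤ) →+ ℤ)
    (hreg : ∀ g ∈ c.support, ∀ g' ∈ c.support, g ≠ g' → s g ≠ s g') :
    (∑ g ∈ c.support, LaurentPolynomial.C (c g) * LaurentPolynomial.T (s g)) ≠ 0 ∧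
    laurentSpan (∑ g ∈ c.support, LaurentPolynomial.C (c g) * LaurentPolynomial.T (s g)) =
      (c.support ×ˢ c.support).sup' (hc.product hc) (fun p => |s p.1 - s p.2|) := by
  have hinj : Set.InjOn s c.support := fun g hg g' hg' h => by_contra (hreg g hg g' hg' · h)
  have hsupp : (∑ g ∈ c.support, C (c g) * T (s g) : ℂ[T;T⁻¹]).coeff.support =
      c.support.image s := by
    rw [coeff_sum_C_mul_T, Finsupp.mapDomain_support_of_injOn c hinj]
  refine ⟨fun h0 => ?_, ?_⟩
  · have hne := hc.image s
    rw [← hsupp, h0] at hne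
    simp at hne
  · rw [laurentSpan_of_support_eq_image hc s hsupp, Finset.sup'_abs_sub_eq_sup'_sub_inf']
end

section
/- Let n ≥ 1, let w : {1, …, n} → ℕ, and let A be an n × n matrix over ℂ[t^{±1}] such that each entry in the j-th column has the form a + b·t^{w_j} with a, b ∈ ℂ (a, b depending on the entry). Then there exists an ordinary polynomial P ∈ ℂ[t] with deg P ≤ Σ_{j=1}^n w_j such that det A equals the image of P in ℂ[t^{±1}]. In particular, if det A ≠ 0 then span(det A) ≤ Σ_{j=1}^n w_j. -/
open Polynomial LaurentPolynomial

theorem Matrix.natDegree_det_le_sum_of_natDegree_le {ι R : Type*} [Fintype ι] [DecidableEq ι]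
    [CommRing R] (M : Matrix ι ι R[X]) (w : ι → ℕ) (h : ∀ i j, (M i j).natDegree ≤ w j) :
    M.det.natDegree ≤ ∑ j, w j := by
  rw [Matrix.det_apply']
  refine natDegree_sum_le_of_forall_le _ _ fun σ _ => ?_
  calc (((σ.sign : ℤ) : R[X]) * ∏ j, M (σ j) j).natDegree
      ≤ (∏ j, M (σ j) j).natDegree := by
        simpa using natDegree_mul_le (p := ((σ.sign : ℤ) : R[X]))
    _ ≤ ∑ j, (M (σ j) j).natDegree := natDegree_prod_le _ _
    _ ≤ ∑ j, w j := Finset.sum_le_sum fun j _ => h (σ j) j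

theorem laurentSpan_toLaurent_le (P : ℂ[X]) : laurentSpan (toLaurent P) ≤ P.natDegree := by
  have hsupp : (toLaurent P).coeff.support = P.support.map Nat.castEmbedding :=
    support_coeff_toLaurent P
  unfold laurentSpan
  split_ifs with hne
  · have hmax : (toLaurent P).coeff.support.max' hne ≤ P.natDegree :=
      Finset.max'_le _ _ _ fun y hy => by
        obtain ⟨m, hm, rfl⟩ := Finset.mem_map.mp (hsupp ▸ hy)
        exact Int.ofNat_le.mpr (le_natDegree_of_mem_supp m hm)
    have hmin : 0 ≤ (toLaurent P).coeff.support.min' hne :=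
      Finset.le_min' _ _ _ fun y hy => by
        obtain ⟨m, -, rfl⟩ := Finset.mem_map.mp (hsupp ▸ hy)
        exact Int.natCast_nonneg m
    omega
  · exact Int.natCast_nonneg _

theorem det_span_estimate_general {n : ℕ} (w : Fin n → ℕ)
    (A : Matrix (Fin n) (Fin n) (LaurentPolynomial ℂ))
    (hA : ∀ i j, ∃ a b : ℂ,
      A i j = LaurentPolynomial.C a + LaurentPolynomial.C b * LaurentPolynomial.T (w j)) :
    (∃ P : Polynomial ℂ, P.natDegree ≤ ∑ j, w j ∧ A.det = Polynomial.toLaurent P) ∧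
    (A.det ≠ 0 → laurentSpan A.det ≤ ∑ j, w j) := by
  choose a b hab using hA
  let B : Matrix (Fin n) (Fin n) ℂ[X] := fun i j =>
    Polynomial.C (a i j) + Polynomial.C (b i j) * X ^ w j
  have hAB : A = B.map toLaurent := by
    ext i j : 1
    rw [Matrix.map_apply, hab]
    simp [B]
  have hdet : A.det = toLaurent B.det := by
    rw [hAB, RingHom.map_det]; rfl
  have hdeg : B.det.natDegree ≤ ∑ j, w j :=
    B.natDegree_det_le_sum_of_natDegree_le w fun i j => by simp only [B]; compute_degree
  refine ⟨⟨B.det, hdeg, hdet⟩, fun _ => ?_⟩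
  rw [hdet]
  exact (laurentSpan_toLaurent_le _).trans (by exact_mod_cast hdeg)

/-- Determinant estimate: if each entry of the `j`-th column of the `n × n`
matrix `A` over `ℂ[t^{±1}]` has the form `a + b·t^{wⱼ}` with `a, b ∈ ℂ`, then
`det A` is (the image of) an ordinary polynomial of degree at most `∑ⱼ wⱼ`;
in particular, if `det A ≠ 0` then `span(det A) ≤ ∑ⱼ wⱼ`. -/
theorem det_span_estimate {n : ℕ} (hn : 1 ≤ n) (w : Fin n → ℕ)
    (A : Matrix (Fin n) (Fin n) (LaurentPolynomial ℂ))
    (hA : ∀ i j, ∃ a b : ℂ,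
      A i j = LaurentPolynomial.C a + LaurentPolynomial.C b * LaurentPolynomial.T (w j)) :
    (∃ P : Polynomial ℂ, P.natDegree ≤ ∑ j, w j ∧ A.det = Polynomial.toLaurent P) ∧
    (A.det ≠ 0 → laurentSpan A.det ≤ ∑ j, w j) :=
  det_span_estimate_general w A hA
end

section
/- Let Λ = ℂ[t^{±1}] and let A be an n × n matrix over Λ with det A ≠ 0. Then the cokernel Λ^n / A·Λ^n of the Λ-linear map Λ^n → Λ^n given by multiplication by A is a finite-dimensional complex vector space of dimension dim_ℂ (Λ^n / A·Λ^n) = span(det A). -/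
open Module LaurentPolynomial Polynomial

theorem Submodule.associated_det_subtype_comp_prod_smithNormalFormCoeffs {ι R M : Type*}
    [CommRing R] [IsDomain R] [IsPrincipalIdealRing R] [AddCommGroup M] [Module R M] [Fintype ι]
    [DecidableEq ι] (b : Basis ι R M) {N : Submodule R M}
    (h : finrank R N = finrank R M) (e : M ≃ₗ[R] N) :
    Associated (LinearMap.det (N.subtype ∘ₗ e)) (∏ i, smithNormalFormCoeffs b h i) := by
  let b' := smithNormalFormTopBasis b h
  let e' : M ≃ₗ[R] N := b'.equiv (smithNormalFormBotBasis b h) (Equiv.refl _)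
  have hdiag : LinearMap.toMatrix b' b' (N.subtype ∘ₗ e') =
      Matrix.diagonal (smithNormalFormCoeffs b h) := by
    ext i j
    rcases eq_or_ne i j with rfl | hij
    · simp [LinearMap.toMatrix_apply, e', b']
    · simp [LinearMap.toMatrix_apply, e', b', hij]
  refine (LinearMap.associated_det_comp_equiv _ e e').trans (Associated.of_eq ?_)
  rw [← LinearMap.det_toMatrix b', hdiag, Matrix.det_diagonal]

theorem IsLocalization.isPrincipalIdealRing {R S : Type*} [CommRing R] [CommRing S] [Algebra R S]
    (M : Submonoid R) [IsLocalization M S] [IsPrincipalIdealRing R] : IsPrincipalIdealRing S where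
  principal J := by
    obtain ⟨g, hg⟩ := (IsPrincipalIdealRing.principal (J.under R)).principal
    refine ⟨⟨algebraMap R S g, ?_⟩⟩
    rw [← IsLocalization.map_under M S J, hg, Ideal.submodule_span_eq, Ideal.map_span,
      Set.image_singleton, Ideal.submodule_span_eq]

namespace IsLocalization.Away

variable {R S : Type*} [CommRing R] [CommRing S] [Algebra R S] (x : R) [IsLocalization.Away x S]

noncomputable def quotientEquiv (I : Ideal R) (hx : IsUnit (Ideal.Quotient.mk I x)) :
    R ⧸ I ≃+* S ⧸ I.map (algebraMap R S) :=
  RingEquiv.ofRingHom (Ideal.quotientMap _ (algebraMap R S) Ideal.le_comap_map)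
    (Ideal.Quotient.lift _ (lift x hx) fun _ hs => by
      have : I.map (algebraMap R S) ≤ RingHom.ker (lift x hx) :=
        Ideal.map_le_iff_le_comap.mpr fun r hr => by
          simpa [lift_eq, Ideal.Quotient.eq_zero_iff_mem] using hr
      exact RingHom.mem_ker.mp (this hs))
    (Ideal.Quotient.ringHom_ext (IsLocalization.ringHom_ext (Submonoid.powers x)
      (RingHom.ext fun r => by
        simp only [RingHom.comp_apply, RingHom.id_apply, Ideal.Quotient.lift_mk, lift_eq,
          Ideal.quotientMap_mk])))
    (Ideal.Quotient.ringHom_ext (RingHom.ext fun r => by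
      simp only [RingHom.comp_apply, RingHom.id_apply, Ideal.Quotient.lift_mk, lift_eq,
        Ideal.quotientMap_mk]))

@[simp]
theorem quotientEquiv_mk (I : Ideal R) (hx : IsUnit (Ideal.Quotient.mk I x)) (r : R) :
    quotientEquiv (S := S) x I hx (Ideal.Quotient.mk I r) =
      Ideal.Quotient.mk _ (algebraMap R S r) := by
  simp [quotientEquiv]

end IsLocalization.Away

theorem Polynomial.isUnit_mk_X_of_coeff_zero_ne_zero {K : Type*} [Field K] {q : K[X]}
    (h0 : q.coeff 0 ≠ 0) : IsUnit (Ideal.Quotient.mk (Ideal.span {q}) X) := by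
  obtain ⟨r, hr⟩ : X ∣ q - C (q.coeff 0) := by simp [X_dvd_iff]
  have : Ideal.Quotient.mk (Ideal.span {q}) X * Ideal.Quotient.mk _ (-r) =
      Ideal.Quotient.mk _ (C (q.coeff 0)) := by
    rw [← map_mul, Ideal.Quotient.mk_eq_mk_iff_sub_mem, Ideal.mem_span_singleton]
    exact ⟨-1, by linear_combination hr⟩
  exact isUnit_of_mul_isUnit_left (this ▸ (isUnit_C.mpr h0.isUnit).map _)

namespace LaurentPolynomial

instance {K : Type*} [Field K] : IsPrincipalIdealRing K[T;T⁻¹] :=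
  IsLocalization.isPrincipalIdealRing (Submonoid.powers (X : K[X]))

theorem exists_eq_toLaurent_mul_T {R : Type*} [CommRing R] {p : R[T;T⁻¹]} (hp : p ≠ 0) :
    ∃ (q : R[X]) (m : ℤ), q.coeff 0 ≠ 0 ∧ p = toLaurent q * T m := by
  obtain ⟨n, f, hf⟩ := exists_T_pow p
  have hf0 : f ≠ 0 := by
    rintro rfl
    exact hp ((isUnit_T _).mul_left_eq_zero.mp (by simpa using hf.symm))
  obtain ⟨q, hfq, hXq⟩ := f.exists_eq_pow_rootMultiplicity_mul_and_not_dvd hf0 0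
  set k := f.rootMultiplicity 0
  rw [map_zero, sub_zero] at hfq hXq
  refine ⟨q, k - n, fun h => hXq (X_dvd_iff.mpr h), ?_⟩
  have hp' : p = toLaurent f * T (-n) := by rw [hf, mul_T_assoc]; simp
  rw [hp', hfq, map_mul, map_pow, toLaurent_X, T_pow, mul_one, T_sub]
  ring

noncomputable def quotientSpanEquiv {K : Type*} [Field K] {q : K[X]} (h0 : q.coeff 0 ≠ 0)
    (m : ℤ) : (K[X] ⧸ Ideal.span {q}) ≃ₐ[K] K[T;T⁻¹] ⧸ Ideal.span {toLaurent q * T m} :=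
  AlgEquiv.ofRingEquiv (f := (IsLocalization.Away.quotientEquiv (S := K[T;T⁻¹]) X _
      (isUnit_mk_X_of_coeff_zero_ne_zero h0)).trans
    (Ideal.quotEquivOfEq (by
      rw [Ideal.map_span, Set.image_singleton, algebraMap_eq_toLaurent,
        Ideal.span_singleton_mul_right_unit (isUnit_T m)])))
    fun c => by
      rw [← Ideal.Quotient.mk_algebraMap, ← Ideal.Quotient.mk_algebraMap]
      simp

end LaurentPolynomial

theorem laurentSpan_eq_of_support_eq_image {α : Type*} [LinearOrder α] {p : ℂ[T;T⁻¹]}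
    {s : Finset α} (hs : s.Nonempty) {g : α → ℤ} (hg : Monotone g)
    (h : p.coeff.support = s.image g) : laurentSpan p = g (s.max' hs) - g (s.min' hs) := by
  simp [laurentSpan, h, hs, Finset.max'_image hg, Finset.min'_image hg]

theorem laurentSpan_mul_T (p : ℂ[T;T⁻¹]) (n : ℤ) : laurentSpan (p * T n) = laurentSpan p := by
  rcases eq_or_ne p 0 with rfl | hp
  · simp
  have hs : p.coeff.support.Nonempty := by simpa using hp
  have h : (p * T n).coeff.support = p.coeff.support.image (· + n) :=
    (AddMonoidAlgebra.support_coeff_mul_single p 1 (by simp) n).trans (Finset.map_eq_image _ _)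
  rw [laurentSpan_eq_of_support_eq_image hs add_left_mono h, laurentSpan, dif_pos hs]
  ring

theorem laurentSpan_toLaurent {q : ℂ[X]} (h0 : q.coeff 0 ≠ 0) :
    laurentSpan (toLaurent q) = q.natDegree := by
  have hq : q ≠ 0 := by rintro rfl; simp at h0
  have hs := nonempty_support_iff.mpr hq
  have hmin : q.support.min' hs = 0 :=
    Nat.eq_zero_of_le_zero (Finset.min'_le _ _ (mem_support_iff.mpr h0))
  rw [laurentSpan_eq_of_support_eq_image hs Nat.mono_cast
    ((support_coeff_toLaurent q).trans (Finset.map_eq_image _ _)), ← natDegree_eq_support_max' hq,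
    hmin, Nat.cast_zero, sub_zero]

theorem laurentSpan_toLaurent_mul_T {q : ℂ[X]} (h0 : q.coeff 0 ≠ 0) (m : ℤ) :
    laurentSpan (toLaurent q * T m) = q.natDegree := by
  rw [laurentSpan_mul_T, laurentSpan_toLaurent h0]

theorem laurentSpan_nonneg (p : ℂ[T;T⁻¹]) : 0 ≤ laurentSpan p := by
  unfold laurentSpan
  split_ifs with h
  · exact sub_nonneg.mpr (Finset.min'_le_max' _ h)
  · rfl

theorem laurentSpan_mul {p q : ℂ[T;T⁻¹]} (hp : p ≠ 0) (hq : q ≠ 0) :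
    laurentSpan (p * q) = laurentSpan p + laurentSpan q := by
  obtain ⟨a, m, ha, rfl⟩ := exists_eq_toLaurent_mul_T hp
  obtain ⟨b, k, hb, rfl⟩ := exists_eq_toLaurent_mul_T hq
  have hab : (a * b).coeff 0 ≠ 0 := by rw [mul_coeff_zero]; exact mul_ne_zero ha hb
  have ha' : a ≠ 0 := by rintro rfl; simp at ha
  have hb' : b ≠ 0 := by rintro rfl; simp at hb
  have : toLaurent a * T m * (toLaurent b * T k) = toLaurent (a * b) * T (m + k) := by
    rw [map_mul, T_add]; ring
  rw [this, laurentSpan_toLaurent_mul_T hab, laurentSpan_toLaurent_mul_T ha,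
    laurentSpan_toLaurent_mul_T hb, natDegree_mul ha' hb', Nat.cast_add]

theorem laurentSpan_one : laurentSpan 1 = 0 := by
  simpa using laurentSpan_toLaurent (q := 1) (by simp)

theorem laurentSpan_eq_zero_of_isUnit {u : ℂ[T;T⁻¹]} (hu : IsUnit u) : laurentSpan u = 0 := by
  obtain ⟨v, huv⟩ := hu.exists_right_inv
  have h := laurentSpan_mul (left_ne_zero_of_mul_eq_one huv) (right_ne_zero_of_mul_eq_one huv)
  rw [huv, laurentSpan_one] at h
  linarith [laurentSpan_nonneg u, laurentSpan_nonneg v]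

theorem laurentSpan_eq_of_associated {p q : ℂ[T;T⁻¹]} (h : Associated p q) :
    laurentSpan p = laurentSpan q := by
  obtain ⟨u, rfl⟩ := h
  rcases eq_or_ne p 0 with rfl | hp
  · simp
  rw [laurentSpan_mul hp u.ne_zero, laurentSpan_eq_zero_of_isUnit u.isUnit, add_zero]

theorem laurentSpan_prod {ι : Type*} (s : Finset ι) {f : ι → ℂ[T;T⁻¹]}
    (hf : ∀ i ∈ s, f i ≠ 0) :
    laurentSpan (∏ i ∈ s, f i) = ∑ i ∈ s, laurentSpan (f i) := by
  induction s using Finset.cons_induction with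
  | empty => simpa using laurentSpan_one
  | cons i s hi ih =>
    rw [Finset.forall_mem_cons] at hf
    rw [Finset.prod_cons, Finset.sum_cons, laurentSpan_mul hf.1 (Finset.prod_ne_zero_iff.mpr hf.2),
      ih hf.2]

theorem finiteDimensional_quotient_span_singleton {c : ℂ[T;T⁻¹]} (hc : c ≠ 0) :
    FiniteDimensional ℂ (ℂ[T;T⁻¹] ⧸ Ideal.span {c}) := by
  obtain ⟨q, m, h0, rfl⟩ := exists_eq_toLaurent_mul_T hc
  have hq : q ≠ 0 := by rintro rfl; simp at h0
  have : FiniteDimensional ℂ (ℂ[X] ⧸ Ideal.span {q}) := (AdjoinRoot.powerBasis hq).finite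
  exact (quotientSpanEquiv h0 m).toLinearEquiv.finiteDimensional

theorem finrank_quotient_span_singleton {c : ℂ[T;T⁻¹]} (hc : c ≠ 0) :
    (finrank ℂ (ℂ[T;T⁻¹] ⧸ Ideal.span {c}) : ℤ) = laurentSpan c := by
  obtain ⟨q, m, h0, rfl⟩ := exists_eq_toLaurent_mul_T hc
  rw [← (quotientSpanEquiv h0 m).toLinearEquiv.finrank_eq, finrank_quotient_span_eq_natDegree,
    laurentSpan_toLaurent_mul_T h0]

/-- For an `n × n` matrix `A` over `Λ = ℂ[t^{±1}]` with `det A ≠ 0`, the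
cokernel `Λⁿ/A·Λⁿ` is a finite-dimensional complex vector space of dimension
`span(det A)`. -/
theorem coker_finrank_eq_span_det {n : ℕ}
    (A : Matrix (Fin n) (Fin n) (LaurentPolynomial ℂ)) (hA : A.det ≠ 0) :
    FiniteDimensional ℂ
      ((Fin n → LaurentPolynomial ℂ) ⧸ LinearMap.range (Matrix.toLin' A)) ∧
    (Module.finrank ℂ
      ((Fin n → LaurentPolynomial ℂ) ⧸ LinearMap.range (Matrix.toLin' A)) : ℤ) =
      laurentSpan A.det := by
  set N := LinearMap.range (Matrix.toLin' A)
  let e := LinearEquiv.ofInjective (Matrix.toLin' A) (Matrix.mulVec_injective_of_det_ne_zero hA)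
  let b := Pi.basisFun ℂ[T;T⁻¹] (Fin n)
  have h : finrank ℂ[T;T⁻¹] N = finrank ℂ[T;T⁻¹] (Fin n → ℂ[T;T⁻¹]) := e.finrank_eq.symm
  set a := Submodule.smithNormalFormCoeffs b h
  have ha (i : Fin n) : a i ≠ 0 := Submodule.smithNormalFormCoeffs_ne_zero b h i
  have hdet : Associated A.det (∏ i, a i) := by
    have he : N.subtype ∘ₗ e.toLinearMap = Matrix.toLin' A := LinearMap.ext fun _ => rfl
    rw [← LinearMap.det_toLin', ← he]
    exact Submodule.associated_det_subtype_comp_prod_smithNormalFormCoeffs b h e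
  have (i : Fin n) := finiteDimensional_quotient_span_singleton (ha i)
  let E := (N.quotientEquivPiSpan b h).restrictScalars ℂ
  refine ⟨E.symm.finiteDimensional, ?_⟩
  rw [E.finrank_eq, finrank_pi_fintype, laurentSpan_eq_of_associated hdet,
    laurentSpan_prod _ fun i _ => ha i, Nat.cast_sum]
  exact Finset.sum_congr rfl fun i _ => finrank_quotient_span_singleton (ha i)
end

section
/- Let f : ℤ^n → ℝ be a function satisfying: f(x) ≥ 0 for all x, f(x + y) ≤ f(x) + f(y) for all x, y ∈ ℤ^n, and f(k·x) = |k|·f(x) for all k ∈ ℤ and x ∈ ℤ^n. Then there exists a unique continuous function g : ℝ^n → ℝ such that g agrees with f on the lattice ℤ^n ⊆ ℝ^n, g(v + w) ≤ g(v) + g(w) for all v, w ∈ ℝ^n, and g(r·v) = |r|·g(v) for all r ∈ ℝ and v ∈ ℝ^n. -/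
/-!
A subadditive `f` with `f (k • x) = |k| * f x` is a `Seminorm ℤ` on `ℤⁿ`. Homogeneity forces the
value of an extension at a rational point `v`: if `d • v = x` is integral, it must be `f x / |d|`.
This formula is well defined, subadditive, `ℚ`-homogeneous and bounded by `(∑ i, f eᵢ) * ‖v‖`, hence
Lipschitz on the dense subspace `ℚⁿ ⊆ ℝⁿ`. Its Lipschitz extension to `ℝⁿ` inherits subadditivity
and `ℝ`-homogeneity by density, and any continuous homogeneous extension agrees with it on `ℚⁿ`.
-/

open Set

namespace LatticeNorm

variable {ι : Type*}

def latticeIncl : (ι → ℤ) →+ (ι → ℝ) := (Int.castAddHom ℝ).compLeft ι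

@[simp]
lemma latticeIncl_apply (x : ι → ℤ) (i : ι) : latticeIncl x i = x i := rfl

lemma latticeIncl_injective : Function.Injective (latticeIncl : (ι → ℤ) → ι → ℝ) :=
  fun _ _ h => funext fun i => by simpa using congrFun h i

lemma apply_le_mul_norm_latticeIncl [Fintype ι] [DecidableEq ι] (p : Seminorm ℤ (ι → ℤ))
    (x : ι → ℤ) : p x ≤ (∑ i, p (Pi.single i 1)) * ‖latticeIncl x‖ := by
  calc p x = p (∑ i, x i • Pi.single i 1) := by simp [← Pi.single_smul, Finset.univ_sum_single]
    _ ≤ ∑ i, p (x i • Pi.single i 1) :=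
      Finset.le_sum_of_subadditive p (map_zero p).le (map_add_le_add p) _ _
    _ = ∑ i, ‖x i‖ * p (Pi.single i 1) := by simp only [map_smul_eq_mul]
    _ ≤ ∑ i, ‖latticeIncl x‖ * p (Pi.single i 1) := by
      gcongr with i
      rw [← Int.norm_cast_real]
      exact norm_le_pi_norm (latticeIncl x) i
    _ = _ := by rw [Finset.sum_mul]; simp only [mul_comm]

variable (ι) in
noncomputable def ratPoints : Submodule ℚ (ι → ℝ) :=
  LinearMap.range ((Algebra.linearMap ℚ ℝ).compLeft ι)

lemma dense_ratPoints : Dense (ratPoints ι : Set (ι → ℝ)) :=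
  DenseRange.piMap fun _ => Rat.denseRange_cast

lemma latticeIncl_mem_ratPoints (x : ι → ℤ) : latticeIncl x ∈ ratPoints ι :=
  ⟨fun i => x i, funext fun i => by simp⟩

lemma rat_smul_mem_ratPoints (q : ℚ) {v : ι → ℝ} (hv : v ∈ ratPoints ι) :
    (q : ℝ) • v ∈ ratPoints ι := by
  rw [Rat.cast_smul_eq_qsmul]
  exact Submodule.smul_mem _ q hv

lemma exists_zsmul_eq_latticeIncl [Finite ι] {v : ι → ℝ} (hv : v ∈ ratPoints ι) :
    ∃ d : ℤ, d ≠ 0 ∧ ∃ x, d • v = latticeIncl x := by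
  obtain ⟨a, rfl⟩ := hv
  obtain ⟨⟨d, hd⟩, hx⟩ := IsLocalization.exist_integer_multiples_of_finite (nonZeroDivisors ℤ) a
  choose x hx using hx
  refine ⟨d, nonZeroDivisors.ne_zero hd, x, funext fun i => ?_⟩
  simpa [eq_comm] using congrArg ((↑) : ℚ → ℝ) (hx i)

/-- `p x / ‖d‖` for some `d ≠ 0` with `d • v = x`; an arbitrary value off `ratPoints`. -/
noncomputable def ratExtension (p : Seminorm ℤ (ι → ℤ)) (v : ι → ℝ) : ℝ :=
  let r := Classical.epsilon fun r : ℤ × (ι → ℤ) => r.1 ≠ 0 ∧ r.1 • v = latticeIncl r.2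
  p r.2 / ‖r.1‖

variable {p : Seminorm ℤ (ι → ℤ)}

lemma ratExtension_eq {v : ι → ℝ} {d : ℤ} {x : ι → ℤ} (hd : d ≠ 0)
    (hv : d • v = latticeIncl x) : ratExtension p v = p x / ‖d‖ := by
  have hspec := Classical.epsilon_spec
    (⟨(d, x), hd, hv⟩ : ∃ r : ℤ × (ι → ℤ), r.1 ≠ 0 ∧ r.1 • v = latticeIncl r.2)
  unfold ratExtension
  generalize Classical.epsilon (α := ℤ × (ι → ℤ)) _ = r at hspec ⊢
  obtain ⟨d', x'⟩ := r
  obtain ⟨hd', hv'⟩ := hspec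
  have hcross : d • x' = d' • x :=
    latticeIncl_injective (by rw [map_zsmul, map_zsmul, ← hv, ← hv', smul_comm])
  have := congrArg p hcross
  rw [map_smul_eq_mul, map_smul_eq_mul] at this
  rw [div_eq_div_iff (norm_ne_zero_iff.2 hd') (norm_ne_zero_iff.2 hd)]
  linarith

lemma ratExtension_latticeIncl (x : ι → ℤ) : ratExtension p (latticeIncl x) = p x := by
  simp [ratExtension_eq one_ne_zero (one_smul ℤ (latticeIncl x))]

lemma ratExtension_add_le [Finite ι] {v w : ι → ℝ} (hv : v ∈ ratPoints ι) (hw : w ∈ ratPoints ι) :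
    ratExtension p (v + w) ≤ ratExtension p v + ratExtension p w := by
  obtain ⟨d, hd, x, hx⟩ := exists_zsmul_eq_latticeIncl hv
  obtain ⟨e, he, y, hy⟩ := exists_zsmul_eq_latticeIncl hw
  have hsum : (d * e) • (v + w) = latticeIncl (e • x + d • y) := by
    rw [map_add, map_zsmul, map_zsmul, ← hx, ← hy, smul_add, mul_smul, mul_smul, smul_comm d e v]
  rw [ratExtension_eq (mul_ne_zero hd he) hsum, ratExtension_eq hd hx, ratExtension_eq he hy]
  have hd' : 0 < ‖d‖ := norm_pos_iff.2 hd
  have he' : 0 < ‖e‖ := norm_pos_iff.2 he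
  calc p (e • x + d • y) / ‖d * e‖ ≤ (p (e • x) + p (d • y)) / ‖d * e‖ := by
        gcongr; exact map_add_le_add p _ _
    _ = p x / ‖d‖ + p y / ‖e‖ := by
        rw [map_smul_eq_mul, map_smul_eq_mul, norm_mul]
        field_simp

lemma ratExtension_rat_smul [Finite ι] (q : ℚ) {v : ι → ℝ} (hv : v ∈ ratPoints ι) :
    ratExtension p ((q : ℝ) • v) = |(q : ℝ)| * ratExtension p v := by
  obtain ⟨d, hd, x, hx⟩ := exists_zsmul_eq_latticeIncl hv
  have hden : (q.den : ℤ) ≠ 0 := by exact_mod_cast q.den_nz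
  have hqv : (d * q.den) • ((q : ℝ) • v) = latticeIncl (q.num • x) := by
    have hq : (q : ℝ) * q.den = q.num := by exact_mod_cast Rat.mul_den_eq_num q
    rw [map_zsmul, ← hx, ← Int.cast_smul_eq_zsmul ℝ, ← Int.cast_smul_eq_zsmul ℝ,
      ← Int.cast_smul_eq_zsmul ℝ, smul_smul, smul_smul]
    congr 1
    push_cast
    linear_combination (d : ℝ) * hq
  rw [ratExtension_eq (mul_ne_zero hd hden) hqv, ratExtension_eq hd hx, map_smul_eq_mul,
    Rat.cast_def, abs_div, norm_mul, Int.norm_eq_abs, Int.norm_eq_abs, Int.norm_eq_abs]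
  have hd' : 0 < |(d : ℝ)| := by positivity
  have hden' : 0 < |((q.den : ℤ) : ℝ)| := by positivity
  push_cast at hden' ⊢
  field_simp

lemma ratExtension_neg [Finite ι] {v : ι → ℝ} (hv : v ∈ ratPoints ι) :
    ratExtension p (-v) = ratExtension p v := by
  simpa using ratExtension_rat_smul (p := p) (-1) hv

lemma abs_sub_ratExtension_le [Finite ι] {v w : ι → ℝ} (hv : v ∈ ratPoints ι)
    (hw : w ∈ ratPoints ι) :
    |ratExtension p v - ratExtension p w| ≤ ratExtension p (v - w) := by
  have hvw := sub_mem hv hw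
  have h₁ := ratExtension_add_le (p := p) hvw hw
  have h₂ := ratExtension_add_le (p := p) (neg_mem hvw) hv
  rw [sub_add_cancel] at h₁
  rw [neg_sub, sub_add_cancel, ← neg_sub, ratExtension_neg hvw] at h₂
  rw [abs_sub_le_iff]
  constructor <;> linarith

lemma ratExtension_le_mul_norm [Fintype ι] [DecidableEq ι] {v : ι → ℝ} (hv : v ∈ ratPoints ι) :
    ratExtension p v ≤ (∑ i, p (Pi.single i 1)) * ‖v‖ := by
  obtain ⟨d, hd, x, hx⟩ := exists_zsmul_eq_latticeIncl hv
  have hd' : 0 < ‖d‖ := norm_pos_iff.2 hd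
  rw [ratExtension_eq hd hx, div_le_iff₀ hd']
  calc p x ≤ (∑ i, p (Pi.single i 1)) * ‖latticeIncl x‖ := apply_le_mul_norm_latticeIncl p x
    _ = (∑ i, p (Pi.single i 1)) * ‖v‖ * ‖d‖ := by rw [← hx, norm_smul]; ring

variable (p) in
lemma exists_continuous_eqOn_ratExtension [Fintype ι] :
    ∃ G : (ι → ℝ) → ℝ, Continuous G ∧ EqOn G (ratExtension p) (ratPoints ι) := by
  classical
  have hlip : LipschitzOnWith (∑ i, p (Pi.single i 1)).toNNReal (ratExtension p) (ratPoints ι) :=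
    .of_dist_le' fun v hv w hw => by
      rw [Real.dist_eq, dist_eq_norm]
      exact (abs_sub_ratExtension_le hv hw).trans (ratExtension_le_mul_norm (sub_mem hv hw))
  obtain ⟨G, hG, hGF⟩ := hlip.extend_real
  exact ⟨G, hG.continuous, hGF.symm⟩

variable {G : (ι → ℝ) → ℝ}

lemma apply_latticeIncl_of_eqOn_ratExtension (hGF : EqOn G (ratExtension p) (ratPoints ι))
    (x : ι → ℤ) : G (latticeIncl x) = p x :=
  (hGF (latticeIncl_mem_ratPoints x)).trans (ratExtension_latticeIncl x)

lemma add_le_of_eqOn_ratExtension [Finite ι] (hG : Continuous G)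
    (hGF : EqOn G (ratExtension p) (ratPoints ι)) (v w : ι → ℝ) : G (v + w) ≤ G v + G w := by
  have hdense : Dense (ratPoints ι ×ˢ ratPoints ι : Set ((ι → ℝ) × (ι → ℝ))) :=
    dense_ratPoints.prod dense_ratPoints
  refine le_on_closure (f := fun z => G (z.1 + z.2)) (g := fun z => G z.1 + G z.2) ?_
    (by fun_prop) (by fun_prop) (hdense (v, w))
  rintro ⟨v, w⟩ ⟨hv, hw⟩
  dsimp only
  rw [hGF hv, hGF hw, hGF (add_mem hv hw)]
  exact ratExtension_add_le hv hw

lemma smul_eq_of_eqOn_ratExtension [Finite ι] (hG : Continuous G)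
    (hGF : EqOn G (ratExtension p) (ratPoints ι)) (r : ℝ) (v : ι → ℝ) : G (r • v) = |r| * G v := by
  have hdense : Dense (range ((↑) : ℚ → ℝ) ×ˢ (ratPoints ι : Set (ι → ℝ))) :=
    Rat.denseRange_cast.prod dense_ratPoints
  refine congrFun (Continuous.ext_on hdense (f := fun z => G (z.1 • z.2))
    (g := fun z => |z.1| * G z.2) (by fun_prop) (by fun_prop) ?_) (r, v)
  rintro ⟨_, v⟩ ⟨⟨q, rfl⟩, hv⟩
  dsimp only
  rw [hGF hv, hGF (rat_smul_mem_ratPoints q hv)]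
  exact ratExtension_rat_smul q hv

lemma eqOn_ratExtension [Finite ι] {g : (ι → ℝ) → ℝ} (hg : ∀ x, g (latticeIncl x) = p x)
    (hg_smul : ∀ (r : ℝ) v, g (r • v) = |r| * g v) : EqOn g (ratExtension p) (ratPoints ι) := by
  intro v hv
  obtain ⟨d, hd, x, hx⟩ := exists_zsmul_eq_latticeIncl hv
  have hv' : v = (d : ℝ)⁻¹ • latticeIncl x := by
    rw [← hx, ← Int.cast_smul_eq_zsmul ℝ, smul_smul, inv_mul_cancel₀ (by exact_mod_cast hd),
      one_smul]
  rw [ratExtension_eq hd hx, hv', hg_smul, hg, abs_inv, Int.norm_eq_abs, inv_mul_eq_div]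

end LatticeNorm

open LatticeNorm in
theorem lattice_norm_extends_uniquely_general {n : ℕ} (f : (Fin n → ℤ) → ℝ)
    (hf_add : ∀ x y, f (x + y) ≤ f x + f y)
    (hf_hom : ∀ (k : ℤ) (x), f (k • x) = |(k : ℝ)| * f x) :
    ∃! g : (Fin n → ℝ) → ℝ,
      Continuous g ∧
      (∀ x : Fin n → ℤ, g (fun i => (x i : ℝ)) = f x) ∧
      (∀ v w : Fin n → ℝ, g (v + w) ≤ g v + g w) ∧
      (∀ (r : ℝ) (v : Fin n → ℝ), g (r • v) = |r| * g v) := by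
  let p : Seminorm ℤ (Fin n → ℤ) := .of f hf_add fun k x => by rw [hf_hom, Int.norm_eq_abs]
  obtain ⟨G, hG, hGF⟩ := exists_continuous_eqOn_ratExtension p
  refine ⟨G, ⟨hG, apply_latticeIncl_of_eqOn_ratExtension hGF, add_le_of_eqOn_ratExtension hG hGF,
    smul_eq_of_eqOn_ratExtension hG hGF⟩, ?_⟩
  rintro g ⟨hg, hg_lattice, -, hg_smul⟩
  exact hg.ext_on dense_ratPoints hG ((eqOn_ratExtension hg_lattice hg_smul).trans hGF.symm)

/-- A homogeneous norm on the lattice `ℤ^n` (nonnegative, subadditive, and with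
`f(k·x) = |k|·f(x)` for `k ∈ ℤ`) extends uniquely to a continuous homogeneous
norm on `ℝ^n`. -/
theorem lattice_norm_extends_uniquely {n : ℕ} (f : (Fin n → ℤ) → ℝ)
    (hf_nonneg : ∀ x, 0 ≤ f x)
    (hf_add : ∀ x y, f (x + y) ≤ f x + f y)
    (hf_hom : ∀ (k : ℤ) (x), f (k • x) = |(k : ℝ)| * f x) :
    ∃! g : (Fin n → ℝ) → ℝ,
      Continuous g ∧
      (∀ x : Fin n → ℤ, g (fun i => (x i : ℝ)) = f x) ∧
      (∀ v w : Fin n → ℝ, g (v + w) ≤ g v + g w) ∧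
      (∀ (r : ℝ) (v : Fin n → ℝ), g (r • v) = |r| * g v) :=
  lattice_norm_extends_uniquely_general f hf_add hf_hom
end
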